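/- Let n ≥ 1 be an integer, δ > 1, M ≥ 1 an integer, j, k ∈ ℤ, and let r satisfy n/(n+1) < r < 1. Let {Q_τ}_{τ ∈ ℤⁿ} be the partition of ℝⁿ into cubes of side length δ^{-j-M}, namely Q_τ = Π_{i=1}^{n} [δ^{-j-M} τ_i, δ^{-j-M}(τ_i + 1)); for each τ pick a point y_τ ∈ Q_τ and a number a_τ ≥ 0. Then there exists a constant C = C(n,r) > 0, independent of δ, M, j, k, the points y_τ and the numbers a_τ, such that for all x ∈ ℝⁿ: Σ_τ |Q_τ| · [ δ^{-min(j,k)} / (δ^{-min(j,k)} + |x − y_τ|)^{n+1} ] · a_τ ≤ C · δ^{M n (1/r − 1)} · δ^{(j − min(j,k)) n (1/r − 1)} · [ M( Σ_τ a_τ^r χ_{Q_τ} )(x) ]^{1/r}. -/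

import Mathlib

open MeasureTheory Set
open scoped ENNReal

/-- The centered Hardy–Littlewood maximal function
`Mg(x) = sup_{R>0} (1/|B(x,R)|) ∫_{B(x,R)} |g(z)| dz` (as an `ℝ≥0∞`-valued function). -/
noncomputable def hlMax {n : ℕ} (g : EuclideanSpace ℝ (Fin n) → ℝ)
    (x : EuclideanSpace ℝ (Fin n)) : ℝ≥0∞ :=
  ⨆ (R : ℝ) (_ : 0 < R),
    (volume (Metric.ball x R))⁻¹ * ∫⁻ z in Metric.ball x R, ENNReal.ofReal |g z|

/-- The δ-dyadic cube `Q_τ = Π_i [δ^{-l} τ_i, δ^{-l}(τ_i+1))` of side length `δ^{-l}`. -/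
def dyadicCube (n : ℕ) (δ : ℝ) (l : ℤ) (τ : Fin n → ℤ) :
    Set (EuclideanSpace ℝ (Fin n)) :=
  {x | ∀ i, δ ^ (-l) * (τ i : ℝ) ≤ x i ∧ x i < δ ^ (-l) * ((τ i : ℝ) + 1)}

/-!
Put `s = δ^{-(j+M)}` (the side of the cubes) and `ρ = δ^{-min(j,k)} ≥ s`. Since `r ≤ 1`, the
sum is at most the `1/r`-th power of the sum of the `r`-th powers of its terms. The kernel
`ρ / (ρ + |x - y_τ|)^{n+1}` is bounded through the dyadic layer `|x - y_τ| < 2^m ρ` of `y_τ`, and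
the cubes of the `m`-th layer lie in a ball of radius `(1 + √n) 2^m ρ` around `x`, on which
`Σ |Q_τ| a_τ^r` is at most the volume of the ball times `M(Σ a_τ^r χ_{Q_τ})(x)`. Summing over the
layers gives a geometric series of ratio `2^{n - (n+1) r}`, which is `< 1` exactly when
`r > n/(n+1)`; what remains is the factor `(ρ/s)^{n(1/r - 1)} = δ^{(M + j - min(j,k)) n (1/r - 1)}`.
-/

open Function Metric

namespace ENNReal

theorem rpow_sum_le_sum_rpow {ι : Type*} (s : Finset ι) (f : ι → ℝ≥0∞) {p : ℝ} (hp : 0 < p)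
    (hp1 : p ≤ 1) : (∑ i ∈ s, f i) ^ p ≤ ∑ i ∈ s, f i ^ p := by
  classical
  induction s using Finset.induction_on with
  | empty => simp [zero_rpow_of_pos hp]
  | insert a s ha ih =>
    rw [Finset.sum_insert ha, Finset.sum_insert ha]
    exact (rpow_add_le_add_rpow _ _ hp.le hp1).trans (add_le_add_right ih _)

theorem tsum_le_rpow_one_div_tsum_rpow {ι : Type*} (f : ι → ℝ≥0∞) {p : ℝ} (hp : 0 < p)
    (hp1 : p ≤ 1) : ∑' i, f i ≤ (∑' i, f i ^ p) ^ (1 / p) := by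
  rw [ENNReal.tsum_eq_iSup_sum]
  refine iSup_le fun s => ?_
  calc ∑ i ∈ s, f i = ((∑ i ∈ s, f i) ^ p) ^ (1 / p) := by
        rw [← rpow_mul, mul_one_div_cancel hp.ne', rpow_one]
    _ ≤ (∑' i, f i ^ p) ^ (1 / p) :=
        rpow_le_rpow ((rpow_sum_le_sum_rpow s f hp hp1).trans (ENNReal.sum_le_tsum s))
          (by positivity)

end ENNReal

theorem exists_two_pow_mul_mem_Ioc {ρ d : ℝ} (hρ : 0 < ρ) (hd : 0 ≤ d) :
    ∃ m : ℕ, d < 2 ^ m * ρ ∧ 2 ^ m * ρ ≤ 2 * (ρ + d) := by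
  obtain ⟨k, hk, hk1⟩ := exists_nat_pow_near (x := (ρ + d) / ρ) (y := (2 : ℝ))
    (by rw [le_div_iff₀ hρ]; linarith) one_lt_two
  rw [le_div_iff₀ hρ] at hk
  rw [div_lt_iff₀ hρ] at hk1
  exact ⟨k + 1, by linarith, by rw [pow_succ]; linarith⟩

theorem ofReal_div_add_rpow_le_tsum {ρ d α : ℝ} (hρ : 0 < ρ) (hd : 0 ≤ d) (hα : 0 ≤ α) :
    ENNReal.ofReal ((ρ / (ρ + d)) ^ α) ≤ ENNReal.ofReal (2 ^ α) *
      ∑' m : ℕ, if d < 2 ^ m * ρ then ENNReal.ofReal (2 ^ (-α)) ^ m else 0 := by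
  obtain ⟨m, hlt, hle⟩ := exists_two_pow_mul_mem_Ioc hρ hd
  have hratio : ρ / (ρ + d) ≤ 2 * (2 ^ m)⁻¹ := by
    rw [div_le_iff₀ (by positivity)]
    field_simp
    linarith
  calc ENNReal.ofReal ((ρ / (ρ + d)) ^ α) ≤ ENNReal.ofReal ((2 * (2 ^ m)⁻¹) ^ α) :=
        ENNReal.ofReal_le_ofReal (Real.rpow_le_rpow (by positivity) hratio hα)
    _ = ENNReal.ofReal (2 ^ α) * ENNReal.ofReal (2 ^ (-α)) ^ m := by
        rw [← ENNReal.ofReal_pow (by positivity), ← ENNReal.ofReal_mul (by positivity),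
          Real.mul_rpow (by positivity) (by positivity), Real.inv_rpow (by positivity),
          ← Real.rpow_natCast, ← Real.rpow_mul (by norm_num), Real.rpow_neg (by norm_num),
          ← Real.inv_rpow (by norm_num), ← Real.inv_rpow (by norm_num),
          ← Real.rpow_natCast, ← Real.rpow_mul (by norm_num), mul_comm (m : ℝ) α, mul_comm]
    _ ≤ _ := by
        gcongr
        exact le_of_eq_of_le (if_pos hlt).symm (ENNReal.le_tsum m)

/-- The factor `s ^ n * a ^ r` is split off because it is `|Q_τ| a_τ ^ r`, the quantity controlled
by the maximal function. -/
theorem kernel_rpow_eq (n : ℕ) {s ρ d a r : ℝ} (hs : 0 < s) (hρ : 0 < ρ) (hd : 0 ≤ d)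
    (ha : 0 ≤ a) :
    (s ^ n * (ρ / (ρ + d) ^ (n + 1)) * a) ^ r =
      (ρ / s) ^ (n * (1 - r)) / ρ ^ n * (ρ / (ρ + d)) ^ ((n + 1) * r) * (s ^ n * a ^ r) := by
  have hX : s ^ n * (ρ / (ρ + d) ^ (n + 1)) = (s / ρ) ^ n * (ρ / (ρ + d)) ^ (n + 1) := by
    rw [div_pow, div_pow, pow_succ ρ]
    field_simp
  have hu : (ρ / s) ^ (n * (1 - r)) / ρ ^ n * s ^ n = (s / ρ) ^ (n * r) := by
    rw [← inv_div s ρ, Real.inv_rpow (by positivity), ← Real.rpow_neg (by positivity),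
      div_mul_eq_mul_div, mul_div_assoc, ← div_pow, ← Real.rpow_natCast,
      ← Real.rpow_add (by positivity)]
    ring_nf
  rw [hX, Real.mul_rpow (by positivity) ha, Real.mul_rpow (by positivity) (by positivity),
    ← Real.rpow_natCast (s / ρ), ← Real.rpow_natCast (ρ / (ρ + d)), ← Real.rpow_mul (by positivity),
    ← Real.rpow_mul (by positivity), ← hu]
  push_cast
  ring

section DyadicCube

variable {n : ℕ} {δ : ℝ} {l : ℤ}

theorem dyadicCube_eq_preimage (n : ℕ) (δ : ℝ) (l : ℤ) (τ : Fin n → ℤ) :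
    dyadicCube n δ l τ =
      WithLp.ofLp ⁻¹' univ.pi fun i => Ico (δ ^ (-l) * τ i) (δ ^ (-l) * (τ i + 1)) := by
  ext x
  simp [dyadicCube]

theorem measurableSet_dyadicCube (τ : Fin n → ℤ) : MeasurableSet (dyadicCube n δ l τ) := by
  rw [dyadicCube_eq_preimage]
  exact (MeasurableSet.univ_pi fun _ => measurableSet_Ico).preimage (WithLp.measurable_ofLp 2 _)

theorem volume_dyadicCube (τ : Fin n → ℤ) :
    volume (dyadicCube n δ l τ) = ENNReal.ofReal (δ ^ (-l)) ^ n := by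
  rw [dyadicCube_eq_preimage, (PiLp.volume_preserving_ofLp (Fin n)).measure_preimage
    (MeasurableSet.univ_pi fun _ => measurableSet_Ico).nullMeasurableSet, volume_pi_pi]
  simp [Real.volume_Ico, ← mul_sub]

theorem pairwise_disjoint_dyadicCube (hδ : 0 < δ) : Pairwise (Disjoint on dyadicCube n δ l) := by
  intro τ τ' hne
  rw [onFun, Set.disjoint_left]
  intro z hz hz'
  obtain ⟨i, hi⟩ := Function.ne_iff.mp hne
  have hs : 0 < δ ^ (-l) := zpow_pos hδ _
  obtain ⟨h1, h2⟩ := hz i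
  obtain ⟨h3, h4⟩ := hz' i
  rcases lt_or_gt_of_ne hi with hlt | hlt
  · have : (τ i : ℝ) + 1 ≤ τ' i := by exact_mod_cast hlt
    nlinarith
  · have : (τ' i : ℝ) + 1 ≤ τ i := by exact_mod_cast hlt
    nlinarith

theorem dist_le_of_mem_dyadicCube (hδ : 0 < δ) {τ : Fin n → ℤ} {z w : EuclideanSpace ℝ (Fin n)}
    (hz : z ∈ dyadicCube n δ l τ) (hw : w ∈ dyadicCube n δ l τ) :
    dist z w ≤ √n * δ ^ (-l) := by
  have hcoord : ∀ i, dist (z i) (w i) ≤ δ ^ (-l) := fun i => by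
    obtain ⟨hz1, hz2⟩ := hz i
    obtain ⟨hw1, hw2⟩ := hw i
    rw [Real.dist_eq, abs_sub_le_iff]
    constructor <;> linarith
  calc dist z w = √(∑ i, dist (z i) (w i) ^ 2) := EuclideanSpace.dist_eq z w
    _ ≤ √(∑ _i : Fin n, (δ ^ (-l)) ^ 2) := by gcongr with i; exact hcoord i
    _ = √n * δ ^ (-l) := by
        rw [Finset.sum_const, Finset.card_univ, Fintype.card_fin, nsmul_eq_mul,
          Real.sqrt_mul (by positivity), Real.sqrt_sq (zpow_pos hδ _).le]

end DyadicCube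

section MaximalFunction

variable {n : ℕ}

theorem lintegral_ball_le_volume_mul_hlMax (g : EuclideanSpace ℝ (Fin n) → ℝ)
    (x : EuclideanSpace ℝ (Fin n)) {R : ℝ} (hR : 0 < R) :
    ∫⁻ z in ball x R, ENNReal.ofReal |g z| ≤ volume (ball x R) * hlMax g x :=
  (ENNReal.inv_mul_le_iff (measure_ball_pos volume x hR).ne' measure_ball_lt_top.ne).1 <|
    le_iSup₂ (f := fun R (_ : 0 < R) =>
      (volume (ball x R))⁻¹ * ∫⁻ z in ball x R, ENNReal.ofReal |g z|) R hR

theorem tsum_indicator_ofReal_abs {ι α : Type*} {Q : ι → Set α} (hQ : Pairwise (Disjoint on Q))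
    (b : ι → ℝ) (z : α) :
    ∑' τ, (Q τ).indicator (fun _ => ENNReal.ofReal |b τ|) z =
      ENNReal.ofReal |∑' τ, (Q τ).indicator (fun _ => b τ) z| := by
  by_cases hz : ∃ τ, z ∈ Q τ
  · obtain ⟨τ, hτ⟩ := hz
    have hout : ∀ τ' ≠ τ, z ∉ Q τ' := fun τ' hne hτ' => (hQ hne).ne_of_mem hτ' hτ rfl
    rw [tsum_eq_single τ fun τ' hne => indicator_of_notMem (hout τ' hne) _,
      tsum_eq_single τ fun τ' hne => indicator_of_notMem (hout τ' hne) _,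
      indicator_of_mem hτ, indicator_of_mem hτ]
  · simp [indicator_of_notMem (not_exists.1 hz _)]

theorem tsum_volume_inter_ball_mul_le_hlMax {ι : Type*} [Countable ι]
    {Q : ι → Set (EuclideanSpace ℝ (Fin n))} (hQ : Pairwise (Disjoint on Q))
    (hQm : ∀ τ, MeasurableSet (Q τ)) (b : ι → ℝ) (x : EuclideanSpace ℝ (Fin n)) {R : ℝ}
    (hR : 0 < R) :
    ∑' τ, volume (Q τ ∩ ball x R) * ENNReal.ofReal |b τ| ≤
      volume (ball x R) * hlMax (fun z => ∑' τ, (Q τ).indicator (fun _ => b τ) z) x :=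
  calc ∑' τ, volume (Q τ ∩ ball x R) * ENNReal.ofReal |b τ|
      = ∑' τ, ∫⁻ z in ball x R, (Q τ).indicator (fun _ => ENNReal.ofReal |b τ|) z :=
        tsum_congr fun τ => by
          rw [lintegral_indicator_const (hQm τ), Measure.restrict_apply (hQm τ), mul_comm]
    _ = ∫⁻ z in ball x R, ∑' τ, (Q τ).indicator (fun _ => ENNReal.ofReal |b τ|) z :=
        (lintegral_tsum fun τ => (measurable_const.indicator (hQm τ)).aemeasurable).symm
    _ = ∫⁻ z in ball x R, ENNReal.ofReal |∑' τ, (Q τ).indicator (fun _ => b τ) z| := by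
        simp_rw [tsum_indicator_ofReal_abs hQ]
    _ ≤ _ := lintegral_ball_le_volume_mul_hlMax _ x hR

end MaximalFunction

/-- `2^{(n+1)r}` comes from the dyadic bound of the kernel, `(1 + √n)^n |B(0,1)|` from the balls
containing the layers of cubes, and the last factor is the sum of the geometric series of layers. -/
noncomputable def frazierJawerthConst (n : ℕ) (r : ℝ) : ℝ≥0∞ :=
  ENNReal.ofReal (2 ^ ((n + 1) * r) * (1 + √n) ^ n) *
    volume (ball (0 : EuclideanSpace ℝ (Fin n)) 1) *
    (1 - ENNReal.ofReal (2 ^ (n - (n + 1) * r)))⁻¹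

theorem frazierJawerthConst_ne_zero (n : ℕ) (r : ℝ) : frazierJawerthConst n r ≠ 0 :=
  mul_ne_zero (mul_ne_zero (ENNReal.ofReal_pos.2 (by positivity)).ne'
    (measure_ball_pos volume 0 one_pos).ne')
    (ENNReal.inv_ne_zero.2 (ENNReal.sub_ne_top ENNReal.one_ne_top))

theorem frazierJawerthConst_ne_top {n : ℕ} {r : ℝ} (hr : (n : ℝ) < (n + 1) * r) :
    frazierJawerthConst n r ≠ ⊤ :=
  ENNReal.mul_ne_top (ENNReal.mul_ne_top ENNReal.ofReal_ne_top measure_ball_lt_top.ne)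
    (ENNReal.inv_ne_top.2 (tsub_pos_iff_lt.2 (ENNReal.ofReal_lt_one.2
      (Real.rpow_lt_one_of_one_lt_of_neg one_lt_two (by linarith)))).ne')

theorem ofReal_kernel_rpow_le_tsum {X : Type*} [MeasurableSpace X] {μ : Measure X} {Q : Set X}
    (n : ℕ) {s ρ d a r : ℝ} (hs : 0 < s) (hρ : 0 < ρ) (hd : 0 ≤ d) (ha : 0 ≤ a) (hr : 0 < r)
    (hQ : μ Q = ENNReal.ofReal (s ^ n)) :
    ENNReal.ofReal ((μ Q).toReal * (ρ / (ρ + d) ^ (n + 1)) * a) ^ r ≤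
      ENNReal.ofReal ((ρ / s) ^ (n * (1 - r)) / ρ ^ n) * ENNReal.ofReal (2 ^ ((n + 1) * r)) *
        ∑' m : ℕ, ENNReal.ofReal (2 ^ (-((n + 1) * r))) ^ m *
          if d < 2 ^ m * ρ then μ Q * ENNReal.ofReal (a ^ r) else 0 := by
  set P := ENNReal.ofReal ((ρ / s) ^ (n * (1 - r)) / ρ ^ n)
  set α : ℝ := (n + 1) * r
  rw [hQ, ENNReal.toReal_ofReal (by positivity),
    ENNReal.ofReal_rpow_of_nonneg (mul_nonneg (by positivity) ha) hr.le,
    kernel_rpow_eq n hs hρ hd ha, ENNReal.ofReal_mul (by positivity),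
    ENNReal.ofReal_mul (by positivity)]
  calc _ ≤ P * (ENNReal.ofReal (2 ^ α) * ∑' m : ℕ,
          if d < 2 ^ m * ρ then ENNReal.ofReal (2 ^ (-α)) ^ m else 0) *
            ENNReal.ofReal (s ^ n * a ^ r) := by
        gcongr
        exact ofReal_div_add_rpow_le_tsum hρ hd (by positivity)
    _ = P * ENNReal.ofReal (2 ^ α) * ((∑' m : ℕ,
          if d < 2 ^ m * ρ then ENNReal.ofReal (2 ^ (-α)) ^ m else 0) *
            ENNReal.ofReal (s ^ n * a ^ r)) := by
        ring
    _ = _ := by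
        rw [← ENNReal.tsum_mul_right]
        exact congrArg _ (tsum_congr fun m => by
          split_ifs <;> simp [ENNReal.ofReal_mul (pow_nonneg hs.le n)])

theorem tsum_ofReal_kernel_rpow_le_tsum {X ι : Type*} [MeasurableSpace X] {μ : Measure X}
    {Q : ι → Set X} (n : ℕ) {s ρ r : ℝ} {d a : ι → ℝ} (hs : 0 < s) (hρ : 0 < ρ)
    (hd : ∀ τ, 0 ≤ d τ) (ha : ∀ τ, 0 ≤ a τ) (hr : 0 < r)
    (hQ : ∀ τ, μ (Q τ) = ENNReal.ofReal (s ^ n)) :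
    ∑' τ, ENNReal.ofReal ((μ (Q τ)).toReal * (ρ / (ρ + d τ) ^ (n + 1)) * a τ) ^ r ≤
      ENNReal.ofReal ((ρ / s) ^ (n * (1 - r)) / ρ ^ n) * ENNReal.ofReal (2 ^ ((n + 1) * r)) *
        ∑' m : ℕ, ENNReal.ofReal (2 ^ (-((n + 1) * r))) ^ m *
          ∑' τ, if d τ < 2 ^ m * ρ then μ (Q τ) * ENNReal.ofReal (a τ ^ r) else 0 := by
  refine (ENNReal.tsum_le_tsum fun τ =>
    ofReal_kernel_rpow_le_tsum n hs hρ (hd τ) (ha τ) hr (hQ τ)).trans_eq ?_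
  rw [ENNReal.tsum_mul_left, ENNReal.tsum_comm]
  simp_rw [ENNReal.tsum_mul_left]

section Estimate

variable {n : ℕ} {δ : ℝ} {l : ℤ}

theorem tsum_ite_volume_mul_le_hlMax (hδ : 0 < δ) {y : (Fin n → ℤ) → EuclideanSpace ℝ (Fin n)}
    (hy : ∀ τ, y τ ∈ dyadicCube n δ l τ) (b : (Fin n → ℤ) → ℝ) (x : EuclideanSpace ℝ (Fin n))
    {R : ℝ} (hR : 0 < R) :
    ∑' τ, (if dist x (y τ) < R then volume (dyadicCube n δ l τ) * ENNReal.ofReal |b τ| else 0) ≤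
      volume (ball x (R + √n * δ ^ (-l))) *
        hlMax (fun z => ∑' τ, (dyadicCube n δ l τ).indicator (fun _ => b τ) z) x := by
  refine le_trans (ENNReal.tsum_le_tsum fun τ => ?_) (tsum_volume_inter_ball_mul_le_hlMax
    (pairwise_disjoint_dyadicCube hδ) measurableSet_dyadicCube b x (by positivity))
  split_ifs with hτ
  · have hsub : dyadicCube n δ l τ ⊆ ball x (R + √n * δ ^ (-l)) := fun z hz => by
      rw [mem_ball]
      calc dist z x ≤ dist z (y τ) + dist x (y τ) := dist_triangle_right _ _ _
        _ < _ := by linarith [dist_le_of_mem_dyadicCube hδ hz (hy τ)]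
    rw [inter_eq_self_of_subset_left hsub]
  · exact zero_le

theorem tsum_ite_dist_lt_two_pow_mul_le (hδ : 0 < δ) {ρ : ℝ} (hsρ : δ ^ (-l) ≤ ρ)
    {y : (Fin n → ℤ) → EuclideanSpace ℝ (Fin n)} (hy : ∀ τ, y τ ∈ dyadicCube n δ l τ)
    (b : (Fin n → ℤ) → ℝ) (x : EuclideanSpace ℝ (Fin n)) (m : ℕ) :
    ∑' τ, (if dist x (y τ) < 2 ^ m * ρ then
        volume (dyadicCube n δ l τ) * ENNReal.ofReal |b τ| else 0) ≤
      ENNReal.ofReal (((1 + √n) * ρ) ^ n) * ENNReal.ofReal (2 ^ n) ^ m *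
        volume (ball (0 : EuclideanSpace ℝ (Fin n)) 1) *
          hlMax (fun z => ∑' τ, (dyadicCube n δ l τ).indicator (fun _ => b τ) z) x := by
  have hρ : 0 < ρ := (zpow_pos hδ _).trans_le hsρ
  have hR : 2 ^ m * ρ + √n * δ ^ (-l) ≤ (1 + √n) * ρ * 2 ^ m := by
    have : δ ^ (-l) ≤ ρ * 2 ^ m :=
      hsρ.trans (le_mul_of_one_le_right hρ.le (one_le_pow₀ one_le_two))
    nlinarith [Real.sqrt_nonneg n]
  calc _ ≤ _ := tsum_ite_volume_mul_le_hlMax hδ hy b x (by positivity)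
    _ ≤ volume (ball x ((1 + √n) * ρ * 2 ^ m)) *
          hlMax (fun z => ∑' τ, (dyadicCube n δ l τ).indicator (fun _ => b τ) z) x := by
        gcongr
    _ = _ := by
        rw [Measure.addHaar_ball_of_pos _ _ (by positivity), finrank_euclideanSpace_fin,
          mul_pow, ← pow_mul, mul_comm m n, pow_mul, ENNReal.ofReal_mul (by positivity),
          ENNReal.ofReal_pow (by positivity : (0 : ℝ) ≤ 2 ^ n)]

theorem tsum_ofReal_kernel_rpow_le (hδ : 0 < δ) {ρ : ℝ} (hsρ : δ ^ (-l) ≤ ρ) {r : ℝ} (hr : 0 < r)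
    {y : (Fin n → ℤ) → EuclideanSpace ℝ (Fin n)} (hy : ∀ τ, y τ ∈ dyadicCube n δ l τ)
    {a : (Fin n → ℤ) → ℝ} (ha : ∀ τ, 0 ≤ a τ) (x : EuclideanSpace ℝ (Fin n)) :
    ∑' τ, ENNReal.ofReal ((volume (dyadicCube n δ l τ)).toReal *
        (ρ / (ρ + dist x (y τ)) ^ (n + 1)) * a τ) ^ r ≤
      frazierJawerthConst n r * ENNReal.ofReal ((ρ / δ ^ (-l)) ^ (n * (1 - r))) *
        hlMax (fun z => ∑' τ, (dyadicCube n δ l τ).indicator (fun _ => a τ ^ r) z) x := by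
  set s := δ ^ (-l)
  set Mg := hlMax (fun z => ∑' τ, (dyadicCube n δ l τ).indicator (fun _ => a τ ^ r) z) x
  set α : ℝ := (n + 1) * r with hα
  set P := ENNReal.ofReal ((ρ / s) ^ (n * (1 - r)) / ρ ^ n)
  set V := fun τ => volume (dyadicCube n δ l τ) * ENNReal.ofReal (a τ ^ r)
  have hs : 0 < s := zpow_pos hδ _
  have hρ : 0 < ρ := hs.trans_le hsρ
  have hlayer (m : ℕ) := tsum_ite_dist_lt_two_pow_mul_le hδ hsρ hy (fun τ => a τ ^ r) x m
  simp only [abs_of_nonneg (Real.rpow_nonneg (ha _) r)] at hlayer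
  have hratio (m : ℕ) : ENNReal.ofReal (2 ^ (-α)) ^ m * ENNReal.ofReal (2 ^ n) ^ m =
      ENNReal.ofReal (2 ^ (n - α)) ^ m := by
    rw [← mul_pow, ← ENNReal.ofReal_mul (by positivity), ← Real.rpow_natCast 2 n,
      ← Real.rpow_add two_pos, neg_add_eq_sub]
  have hconst : P * ENNReal.ofReal (2 ^ α) * ENNReal.ofReal (((1 + √n) * ρ) ^ n) =
      ENNReal.ofReal (2 ^ α * (1 + √n) ^ n) * ENNReal.ofReal ((ρ / s) ^ (n * (1 - r))) := by
    simp only [P]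
    rw [← ENNReal.ofReal_mul (by positivity), ← ENNReal.ofReal_mul (by positivity),
      ← ENNReal.ofReal_mul (by positivity)]
    congr 1
    field_simp
    exact mul_pow _ _ _
  calc _ ≤ P * ENNReal.ofReal (2 ^ α) * ∑' m : ℕ, ENNReal.ofReal (2 ^ (-α)) ^ m *
        ∑' τ, if dist x (y τ) < 2 ^ m * ρ then V τ else 0 :=
        tsum_ofReal_kernel_rpow_le_tsum n hs hρ (fun _ => dist_nonneg) ha hr
          fun τ => by rw [volume_dyadicCube, ENNReal.ofReal_pow hs.le]
    _ ≤ P * ENNReal.ofReal (2 ^ α) * ∑' m : ℕ, ENNReal.ofReal (2 ^ (-α)) ^ m *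
        (ENNReal.ofReal (((1 + √n) * ρ) ^ n) * ENNReal.ofReal (2 ^ n) ^ m *
          volume (ball (0 : EuclideanSpace ℝ (Fin n)) 1) * Mg) := by
        gcongr with m
        exact hlayer m
    _ = P * ENNReal.ofReal (2 ^ α) * ENNReal.ofReal (((1 + √n) * ρ) ^ n) *
        volume (ball (0 : EuclideanSpace ℝ (Fin n)) 1) * Mg *
          ∑' m : ℕ, ENNReal.ofReal (2 ^ (n - α)) ^ m := by
        rw [← ENNReal.tsum_mul_left, ← ENNReal.tsum_mul_left]
        exact tsum_congr fun m => by rw [← hratio]; ring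
    _ = _ := by
        rw [ENNReal.tsum_geometric, hconst, frazierJawerthConst, ← hα]
        ring

end Estimate

theorem stmt_9 (n : ℕ) (r : ℝ)
    (hr1 : (n : ℝ) / (n + 1) < r) (hr2 : r < 1) :
    ∃ C > (0:ℝ), ∀ (δ : ℝ), 1 < δ → ∀ (M : ℤ), 1 ≤ M → ∀ (j k : ℤ),
      ∀ (y : (Fin n → ℤ) → EuclideanSpace ℝ (Fin n)),
      (∀ τ, y τ ∈ dyadicCube n δ (j + M) τ) →
      ∀ (a : (Fin n → ℤ) → ℝ), (∀ τ, 0 ≤ a τ) →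
      ∀ (x : EuclideanSpace ℝ (Fin n)),
      (∑' τ : Fin n → ℤ,
          ENNReal.ofReal ((volume (dyadicCube n δ (j + M) τ)).toReal *
            (δ ^ (-(min j k)) /
              (δ ^ (-(min j k)) + dist x (y τ)) ^ (n + 1)) * a τ))
        ≤ ENNReal.ofReal (C * δ ^ ((M : ℝ) * (n : ℝ) * (1 / r - 1)) *
              δ ^ (((j - min j k : ℤ) : ℝ) * (n : ℝ) * (1 / r - 1))) *
            (hlMax (fun z => ∑' τ : Fin n → ℤ,
                (dyadicCube n δ (j + M) τ).indicator (fun _ => a τ ^ r) z) x)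
              ^ (1 / r) := by
  have hr0 : 0 < r := lt_of_le_of_lt (by positivity) hr1
  have hnr : (n : ℝ) < (n + 1) * r := by rwa [div_lt_iff₀' (by positivity)] at hr1
  set c := frazierJawerthConst n r
  have hc : c ^ (1 / r) ≠ ⊤ := by simp [c, hr0.le, frazierJawerthConst_ne_top hnr]
  refine ⟨(c ^ (1 / r)).toReal,
    ENNReal.toReal_pos (by simp [c, hr0, hr0.le, frazierJawerthConst_ne_zero]) hc, ?_⟩
  intro δ hδ M hM j k y hy a ha x
  have hδ0 : 0 < δ := zero_lt_one.trans hδ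
  have hsρ : δ ^ (-(j + M)) ≤ δ ^ (-(min j k)) := zpow_le_zpow_right₀ hδ.le (by omega)
  have hexp : ((δ ^ (-(min j k)) / δ ^ (-(j + M))) ^ (n * (1 - r))) ^ (1 / r) =
      δ ^ ((M : ℝ) * n * (1 / r - 1)) * δ ^ (((j - min j k : ℤ) : ℝ) * n * (1 / r - 1)) := by
    rw [← zpow_sub₀ hδ0.ne', ← Real.rpow_intCast, ← Real.rpow_mul hδ0.le,
      ← Real.rpow_mul hδ0.le, ← Real.rpow_add hδ0]
    congr 1
    push_cast
    field_simp
    ring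
  calc _ ≤ _ := ENNReal.tsum_le_rpow_one_div_tsum_rpow _ hr0 hr2.le
    _ ≤ (c * ENNReal.ofReal ((δ ^ (-(min j k)) / δ ^ (-(j + M))) ^ (n * (1 - r))) *
          hlMax (fun z => ∑' τ, (dyadicCube n δ (j + M) τ).indicator (fun _ => a τ ^ r) z) x)
            ^ (1 / r) := by
      gcongr
      exact tsum_ofReal_kernel_rpow_le hδ0 hsρ hr0 hy ha x
    _ = _ := by
      rw [ENNReal.mul_rpow_of_nonneg _ _ (by positivity),
        ENNReal.mul_rpow_of_nonneg _ _ (by positivity),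
        ENNReal.ofReal_rpow_of_nonneg (by positivity) (by positivity), hexp, mul_assoc _ (δ ^ _),
        ENNReal.ofReal_mul ENNReal.toReal_nonneg, ENNReal.ofReal_toReal hc]
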